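/- On the two-element set {0,1}, let t(x,y,z) = x∨(y∧z). Then a quadruple (x1,x2,x3,x4) ∈ {0,1}^4 lies in Δ = {(x1,x2,x3,x4) : x1 = x2 or x3 = x4} if and only if both t(x3,x4,x1) = t(x3,x4,x2) and t(x4,x3,x1) = t(x4,x3,x2) hold. Moreover no single equation f(x1,x2,x3,x4) = g(x1,x2,x3,x4) between quaternary term operations of the algebra ({0,1}; t) has solution set exactly Δ. -/

import Mathlib

/-- The operation `t(x,y,z) = x ∨ (y ∧ z)` on `{0,1}`. -/
def tOp (x y z : Bool) : Bool := x || (y && z)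

/-- Term operations of the algebra `({0,1}; t)`: compositions of `t` and
projections. -/
inductive TermOp : ∀ n : ℕ, ((Fin n → Bool) → Bool) → Prop
  | proj {n : ℕ} (i : Fin n) : TermOp n (fun x => x i)
  | app {n : ℕ} {f g h : (Fin n → Bool) → Bool} :
      TermOp n f → TermOp n g → TermOp n h →
      TermOp n (fun x => tOp (f x) (g x) (h x))

/-- `Δ` on `{0,1}`. -/
def DeltaBool : Set (Fin 4 → Bool) := {x | x 0 = x 1 ∨ x 2 = x 3}

/-!
Since `t(x,y,z) ≥ x` and `t` is monotone, every term operation `f` of `({0,1}; t)` is monotone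
and dominates some projection `xᵢ`. If `f = g` held exactly on `Δ`, then evaluating at the unit
vector `eᵢ ∈ Δ` gives `g(eᵢ) = f(eᵢ) = 1`, so by monotonicity `f = g = 1` on the whole upset
`{x | xᵢ = 1}`; but for each `i` this upset contains a point outside `Δ`. The first half of
the statement is a finite check.
-/

instance decidableMemDeltaBool : DecidablePred (· ∈ DeltaBool) := fun x =>
  inferInstanceAs (Decidable (x 0 = x 1 ∨ x 2 = x 3))

theorem tOp_eq_sup_inf (x y z : Bool) : tOp x y z = x ⊔ (y ⊓ z) := rfl

theorem tOp_mono {x x' y y' z z' : Bool} (hx : x ≤ x') (hy : y ≤ y') (hz : z ≤ z') :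
    tOp x y z ≤ tOp x' y' z' := by
  simpa only [tOp_eq_sup_inf] using sup_le_sup hx (inf_le_inf hy hz)

theorem le_tOp (x y z : Bool) : x ≤ tOp x y z := by
  simpa only [tOp_eq_sup_inf] using le_sup_left

namespace TermOp

variable {n : ℕ} {f g : (Fin n → Bool) → Bool}

theorem monotone (hf : TermOp n f) : Monotone f := by
  induction hf with
  | proj i => exact fun _ _ hxy => hxy i
  | app _ _ _ ihf ihg ihh => exact fun _ _ hxy => tOp_mono (ihf hxy) (ihg hxy) (ihh hxy)

theorem exists_apply_le (hf : TermOp n f) : ∃ i, ∀ x, x i ≤ f x := by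
  induction hf with
  | proj i => exact ⟨i, fun _ => le_rfl⟩
  | app _ _ _ ihf =>
    obtain ⟨i, hi⟩ := ihf
    exact ⟨i, fun x => (hi x).trans (le_tOp _ _ _)⟩

theorem exists_eq_of_eq_single (hf : TermOp n f) (hg : TermOp n g)
    (h : ∀ i, f (Pi.single i true) = g (Pi.single i true)) :
    ∃ i, ∀ x : Fin n → Bool, x i = true → f x = g x := by
  obtain ⟨i, hi⟩ := hf.exists_apply_le
  refine ⟨i, fun x hx => ?_⟩
  have hfx : f x = true := Bool.eq_true_of_true_le (hx ▸ hi x)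
  have hsingle : Pi.single i true ≤ x := by
    intro k
    by_cases hk : k = i
    · rw [hk, Pi.single_eq_same, hx]
    · rw [Pi.single_eq_of_ne hk]
      exact Bool.false_le _
  have hg_single : g (Pi.single i true) = true :=
    h i ▸ Bool.eq_true_of_true_le (by simpa using hi (Pi.single i true))
  have hgx : g x = true := Bool.eq_true_of_true_le (hg_single ▸ hg.monotone hsingle)
  rw [hfx, hgx]

end TermOp

theorem single_mem_deltaBool : ∀ i : Fin 4, (Pi.single i true : Fin 4 → Bool) ∈ DeltaBool := by
  decide

theorem exists_apply_eq_true_notMem_deltaBool :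
    ∀ i : Fin 4, ∃ x : Fin 4 → Bool, x i = true ∧ x ∉ DeltaBool := by
  decide

/-- `Δ` is defined by the two displayed equations over `t(x,y,z) = x ∨ (y ∧ z)`,
but no single equation between quaternary term operations of `({0,1}; t)` has
solution set exactly `Δ`. -/
theorem stmt10 :
    (∀ x : Fin 4 → Bool, x ∈ DeltaBool ↔
      (tOp (x 2) (x 3) (x 0) = tOp (x 2) (x 3) (x 1) ∧
       tOp (x 3) (x 2) (x 0) = tOp (x 3) (x 2) (x 1))) ∧
    ¬ ∃ f g : (Fin 4 → Bool) → Bool, TermOp 4 f ∧ TermOp 4 g ∧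
        {x | f x = g x} = DeltaBool := by
  refine ⟨by decide, ?_⟩
  rintro ⟨f, g, hf, hg, hfg⟩
  have h_solutions : ∀ x, f x = g x ↔ x ∈ DeltaBool := Set.ext_iff.mp hfg
  obtain ⟨i, hi⟩ := hf.exists_eq_of_eq_single hg fun i =>
    (h_solutions _).mpr (single_mem_deltaBool i)
  obtain ⟨x, hxi, hxΔ⟩ := exists_apply_eq_true_notMem_deltaBool i
  exact hxΔ ((h_solutions x).mp (hi x hxi))
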